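/- Let ω, τ₀, τ* > 0 and suppose k ω τ₀ ∉ 2πℤ for every nonzero integer k. Let m: ℤ → ℂ be a summable family, define c_k := m_k / (1 − exp(−i k ω τ₀)) for k ≠ 0 and c₀ := −∑_{k≠0} c_k, and assume the family (c_k)_{k∈ℤ} is summable. Define h₂(λ) := (m₀/τ*) λ + ∑_{k∈ℤ} c_k exp(i k ω (τ₀/τ*) λ). Then h₂(0) = 0 and h₂(λ) − ∑_{k∈ℤ} m_k exp(i k ω (τ₀/τ*) λ) = h₂(λ − τ*) for every λ ∈ ℝ. -/

import Mathlib

/-! Shifting `λ` by `τ*` multiplies the `k`-th mode `e^{ikω(τ₀/τ*)λ}` by `e^{-ikωτ₀}`, so for `k ≠ 0`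
the `k`-th modes of `h₂(λ) - h₂(λ - τ*)` add up to `c_k (1 - e^{-ikωτ₀}) = m_k`. The zero mode is
constant and cancels; the forcing `m₀` it cannot produce comes from the secular term `(m₀/τ*)λ`.
Finally `h₂(0) = ∑ c_k`, which vanishes by the choice of `c₀`. -/

open Complex

lemma Summable.tsum_eq_zero_of_apply_eq_neg_tsum_ne {G ι : Type*} [AddCommGroup G]
    [UniformSpace G] [IsUniformAddGroup G] [CompleteSpace G] [T2Space G] {f : ι → G}
    (hf : Summable f) {b : ι} (hb : f b = -∑' i : {i // i ≠ b}, f i) : ∑' i, f i = 0 := by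
  rw [← hf.tsum_subtype_add_tsum_subtype_compl {b}, tsum_singleton, hb, neg_add_eq_zero]
  rfl

lemma one_sub_exp_neg_mul_I_ne_zero {x : ℝ} (hx : ¬ ∃ n : ℤ, x = 2 * Real.pi * n) :
    1 - exp (-(x * I)) ≠ 0 := by
  rw [sub_ne_zero, ne_comm, Ne, exp_eq_one_iff]
  rintro ⟨n, hn⟩
  refine hx ⟨-n, ?_⟩
  have him := congrArg im hn
  simp at him
  push_cast
  linarith

noncomputable def trigSeries (a : ℤ → ℂ) (ν x : ℝ) : ℂ :=
  ∑' k : ℤ, a k * exp (I * k * ν * x)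

lemma summable_mul_exp_I_mul {a : ℤ → ℂ} (ha : Summable a) (ν x : ℝ) :
    Summable fun k : ℤ ↦ a k * exp (I * k * ν * x) := by
  refine ha.norm.of_norm_bounded fun k ↦ ?_
  rw [norm_mul, show I * k * ν * x = ((k * ν * x : ℝ) : ℂ) * I by push_cast; ring,
    norm_exp_ofReal_mul_I, mul_one]

lemma trigSeries_zero (a : ℤ → ℂ) (ν : ℝ) : trigSeries a ν 0 = ∑' k, a k := by
  simp [trigSeries]

lemma exp_I_mul_sub (k : ℤ) (ν x T : ℝ) :
    exp (I * k * ν * (x - T : ℝ)) = exp (-(I * k * ν * T)) * exp (I * k * ν * x) := by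
  rw [← exp_add]
  push_cast
  ring_nf

theorem linear_add_trigSeries_sub_trigSeries {ν T : ℝ} (hT : T ≠ 0) {c m : ℤ → ℂ}
    (hc : Summable c) (hm : Summable m)
    (hcm : ∀ k ≠ 0, m k = c k * (1 - exp (-(I * k * ν * T)))) (x : ℝ) :
    m 0 / T * x + trigSeries c ν x - trigSeries m ν x
      = m 0 / T * (x - T : ℝ) + trigSeries c ν (x - T) := by
  have hterm : ∀ k : ℤ, c k * exp (I * k * ν * x) - m k * exp (I * k * ν * x)
      = c k * exp (I * k * ν * (x - T : ℝ)) - if k = 0 then m 0 else 0 := by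
    intro k
    rw [exp_I_mul_sub]
    split_ifs with hk
    · simp [hk]
    · rw [hcm k hk]
      ring
  have hseries : trigSeries c ν x - trigSeries m ν x = trigSeries c ν (x - T) - m 0 := by
    rw [trigSeries, trigSeries, trigSeries, ← (summable_mul_exp_I_mul hc ν x).tsum_sub
      (summable_mul_exp_I_mul hm ν x), tsum_congr hterm,
      (summable_mul_exp_I_mul hc ν (x - T)).tsum_sub (summable_of_ne_finset_zero
        (s := {0}) fun k hk ↦ by simp_all), tsum_ite_eq]
  have hT' : (T : ℂ) ≠ 0 := ofReal_ne_zero.mpr hT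
  push_cast
  field_simp
  linear_combination T * hseries

theorem second_order_expansion_functional_equation_general
    (ω τ₀ τs : ℝ) (hτs : 0 < τs)
    (hres : ∀ k : ℤ, k ≠ 0 → ¬ ∃ n : ℤ, (k : ℝ) * ω * τ₀ = 2 * Real.pi * (n : ℝ))
    (m : ℤ → ℂ) (hm : Summable m)
    (c : ℤ → ℂ)
    (hck : ∀ k : ℤ, k ≠ 0 →
      c k = m k / (1 - Complex.exp (-(Complex.I * (k : ℂ) * (ω : ℂ) * (τ₀ : ℂ)))))
    (hc0 : c 0 = -∑' k : {k : ℤ // k ≠ 0}, c (k : ℤ))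
    (hc : Summable c)
    (h₂ : ℝ → ℂ)
    (hh₂ : ∀ l : ℝ, h₂ l = (m 0 / (τs : ℂ)) * (l : ℂ) +
      ∑' k : ℤ, c k * Complex.exp (Complex.I * (k : ℂ) * (ω : ℂ) * ((τ₀ / τs : ℝ) : ℂ) * (l : ℂ))) :
    h₂ 0 = 0 ∧
      ∀ l : ℝ, h₂ l -
        (∑' k : ℤ, m k * Complex.exp (Complex.I * (k : ℂ) * (ω : ℂ) * ((τ₀ / τs : ℝ) : ℂ) * (l : ℂ)))
        = h₂ (l - τs) := by
  set ν := ω * (τ₀ / τs)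
  have hseries : ∀ (a : ℤ → ℂ) (l : ℝ), ∑' k : ℤ, a k *
      exp (I * k * ω * ((τ₀ / τs : ℝ) : ℂ) * l) = trigSeries a ν l :=
    fun a l ↦ tsum_congr fun k ↦ by simp only [ν]; push_cast; ring_nf
  have hcm : ∀ k ≠ 0, m k = c k * (1 - exp (-(I * k * ν * τs))) := by
    intro k hk
    have hντs : I * k * ν * τs = I * k * ω * τ₀ := by
      have : (τs : ℂ) ≠ 0 := ofReal_ne_zero.mpr hτs.ne'
      simp only [ν]; push_cast; field_simp
    have hden : 1 - exp (-(I * k * ω * τ₀)) ≠ 0 := by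
      convert one_sub_exp_neg_mul_I_ne_zero (hres k hk) using 4
      push_cast; ring
    rw [hck k hk, hντs, div_mul_cancel₀ _ hden]
  simp only [hh₂, hseries]
  refine ⟨?_, linear_add_trigSeries_sub_trigSeries hτs.ne' hc hm hcm⟩
  rw [trigSeries_zero, hc.tsum_eq_zero_of_apply_eq_neg_tsum_ne hc0]
  simp

/-- Second-order perturbative expansion. With c_k = m_k/(1 − e^{−ikωτ₀})
for k ≠ 0 and c₀ = −∑_{k≠0} c_k, the function
h₂(λ) = (m₀/τ*)λ + ∑_k c_k e^{ikω(τ₀/τ*)λ} satisfies h₂(0) = 0 and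
h₂(λ) − ∑_k m_k e^{ikω(τ₀/τ*)λ} = h₂(λ − τ*) for all λ ∈ ℝ. -/
theorem second_order_expansion_functional_equation
    (ω τ₀ τs : ℝ) (hω : 0 < ω) (hτ₀ : 0 < τ₀) (hτs : 0 < τs)
    (hres : ∀ k : ℤ, k ≠ 0 → ¬ ∃ n : ℤ, (k : ℝ) * ω * τ₀ = 2 * Real.pi * (n : ℝ))
    (m : ℤ → ℂ) (hm : Summable m)
    (c : ℤ → ℂ)
    (hck : ∀ k : ℤ, k ≠ 0 →
      c k = m k / (1 - Complex.exp (-(Complex.I * (k : ℂ) * (ω : ℂ) * (τ₀ : ℂ)))))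
    (hc0 : c 0 = -∑' k : {k : ℤ // k ≠ 0}, c (k : ℤ))
    (hc : Summable c)
    (h₂ : ℝ → ℂ)
    (hh₂ : ∀ l : ℝ, h₂ l = (m 0 / (τs : ℂ)) * (l : ℂ) +
      ∑' k : ℤ, c k * Complex.exp (Complex.I * (k : ℂ) * (ω : ℂ) * ((τ₀ / τs : ℝ) : ℂ) * (l : ℂ))) :
    h₂ 0 = 0 ∧
      ∀ l : ℝ, h₂ l -
        (∑' k : ℤ, m k * Complex.exp (Complex.I * (k : ℂ) * (ω : ℂ) * ((τ₀ / τs : ℝ) : ℂ) * (l : ℂ)))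
        = h₂ (l - τs) :=
  second_order_expansion_functional_equation_general ω τ₀ τs hτs hres m hm c hck hc0 hc h₂ hh₂
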